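/- Let C be a category equipped with an identity-reflecting functor φ : C → ℕᵒᵖ' (where ℕᵒᵖ' has objects ℕ and a morphism n → m iff n > m, extended with identities), i.e., C is an inverse category of height ≤ ω. Then for any object x : C, the reduced coslice x ⫽ C (objects: pairs (y, f : x ⟶ y) with f not an identity along any equality x = y) is again an inverse category, with rank functor (y,f) ↦ φ y, and the rank of every object of x ⫽ C is strictly less than φ x. -/
import Mathlib


open CategoryTheory

universe v u

/-- `f : x ⟶ y` is a non-identity arrow: it is not equal to the identity along any
equality `x = y`. -/
def NonId {C : Type u} [Category.{v} C] {x y : C} (f : x ⟶ y) : Prop :=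
  ¬ ∃ p : x = y, f = eqToHom p

/-- An object of the reduced coslice `x ⫽ C`: an object `y` together with a
non-identity arrow `x ⟶ y`. -/
structure RedCoslice (C : Type u) [Category.{v} C] (x : C) : Type (max u v) where
  y : C
  f : x ⟶ y
  nid : NonId f

/-- If `C` is an inverse category via an identity-reflecting rank functor
`rank : C → ℕᵒᵖ'`, then the reduced coslice `x ⫽ C` is again an inverse category
with rank functor `(y, f) ↦ rank y`, and every object of `x ⫽ C` has rank strictly
less than `rank x`. -/
theorem reduced_coslice_inverse {C : Type u} [Category.{v} C] (rank : C → ℕ)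
    (hmono : ∀ {a b : C}, (a ⟶ b) → rank b ≤ rank a)
    (hrefl : ∀ {a b : C} (g : a ⟶ b), rank a = rank b → ∃ p : a = b, g = eqToHom p)
    (x : C) :
    (∀ o : RedCoslice C x, rank o.y < rank x) ∧
    (∀ (o o' : RedCoslice C x) (h : o.y ⟶ o'.y), o.f ≫ h = o'.f →
      rank o'.y ≤ rank o.y ∧
      (rank o.y = rank o'.y → ∃ p : o.y = o'.y, h = eqToHom p)) := by
  constructor
  · intro o
    have hle := hmono o.f
    rcases lt_or_eq_of_le hle with h | h
    · exact h
    · exact absurd (hrefl o.f h.symm) o.nid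
  · intro o o' h hc
    exact ⟨hmono h, fun he => hrefl h he⟩
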